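/- arXiv:1412.0780 — 2 statements merged into one kernel-verified Lean document; each statement's English description precedes it below -/
import Mathlib

section
/- Let η > 0, β > 0, 0 < p < η/β, and 0 < α < η. Suppose G(α) = η/p - β - (α/p)(1 - ln(α/η)) > 0. Define F(t) = (η/p)(1 - e^{-pt}) - α·t - β. Then there exist 0 < T₁ < T₂ such that F(t) > 0 for all t ∈ (T₁, T₂). -/
/-- If 0 < p < η/β, 0 < α < η, and G(α) = η/p - β - (α/p)(1 - ln(α/η)) > 0,
then F(t) = (η/p)(1 - e^{-pt}) - α t - β is positive on some interval (T₁, T₂)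
with 0 < T₁ < T₂. -/
theorem stmt_10 (η p α β : ℝ) (hη : 0 < η) (hβ : 0 < β)
    (hp0 : 0 < p) (hp : p < η / β) (hα0 : 0 < α) (hα : α < η)
    (hG : 0 < η / p - β - α / p * (1 - Real.log (α / η)))
    (F : ℝ → ℝ)
    (hF : F = fun t => η / p * (1 - Real.exp (-p * t)) - α * t - β) :
    ∃ T₁ T₂ : ℝ, 0 < T₁ ∧ T₁ < T₂ ∧ ∀ t : ℝ, t ∈ Set.Ioo T₁ T₂ → 0 < F t := by
  subst hF
  set t0 : ℝ := Real.log (η / α) / p with ht0def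
  have hηα : 1 < η / α := (one_lt_div hα0).2 hα
  have ht0 : 0 < t0 := div_pos (Real.log_pos hηα) hp0
  have hexp : Real.exp (-p * t0) = α / η := by
    have : -p * t0 = Real.log (α / η) := by
      rw [ht0def]
      field_simp
      rw [Real.log_div hα0.ne' hη.ne', Real.log_div hη.ne' hα0.ne']
      ring
    rw [this, Real.exp_log (div_pos hα0 hη)]
  have hFt0 : 0 < η / p * (1 - Real.exp (-p * t0)) - α * t0 - β := by
    rw [hexp, ht0def]
    have hlog : Real.log (η / α) = - Real.log (α / η) := by
      rw [Real.log_div hη.ne' hα0.ne', Real.log_div hα0.ne' hη.ne']; ring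
    have key : η / p * (1 - α / η) - α * (Real.log (η / α) / p) - β
        = η / p - β - α / p * (1 - Real.log (α / η)) := by
      rw [hlog]
      field_simp
      ring
    rw [key]; exact hG
  have hcont : ContinuousAt (fun t => η / p * (1 - Real.exp (-p * t)) - α * t - β) t0 := by
    fun_prop
  have hev : ∀ᶠ t in nhds t0, 0 < η / p * (1 - Real.exp (-p * t)) - α * t - β :=
    continuousAt_const.eventually_lt hcont hFt0 |>.mono (fun t ht => ht)
  rw [Metric.eventually_nhds_iff] at hev
  obtain ⟨ε, hε, hball⟩ := hev
  set δ : ℝ := min (ε / 2) (t0 / 2) with hδdef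
  have hδ : 0 < δ := lt_min (by linarith) (by linarith)
  refine ⟨t0 - δ, t0 + δ, ?_, by linarith, ?_⟩
  · have : δ ≤ t0 / 2 := min_le_right _ _
    linarith
  · intro t ht
    apply hball
    have h1 : δ ≤ ε / 2 := min_le_left _ _
    have := ht.1; have := ht.2
    rw [Real.dist_eq, abs_lt]
    constructor <;> linarith
end

section
/- Let η > 0, β > 0, and 0 < p < η/β. Then there exists α* ∈ (0, η) such that for every α with 0 < α < α*, there exist T₁(α), T₂(α) with T₁ < T₂ such that x(t) > α·t + β for all t ∈ (T₁, T₂), where x(t) = (η/p)(1 - e^{-pt}). -/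
/-- Proposition 2: for 0 < p < η/β there exists α* ∈ (0, η) such that for
every 0 < α < α*, the damage x(t) = (η/p)(1 - e^{-pt}) exceeds the threshold
α t + β on some time interval (T₁, T₂). -/
theorem stmt_11 (η p β : ℝ) (hη : 0 < η) (hβ : 0 < β)
    (hp0 : 0 < p) (hp : p < η / β) :
    ∃ αstar ∈ Set.Ioo (0 : ℝ) η, ∀ α : ℝ, 0 < α → α < αstar →
      ∃ T₁ T₂ : ℝ, T₁ < T₂ ∧ ∀ t : ℝ, t ∈ Set.Ioo T₁ T₂ →
        η / p * (1 - Real.exp (-p * t)) > α * t + β := by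
  have hpβ : p * β < η := (lt_div_iff₀ hβ).mp hp
  have hden : 0 < η - p * β := by linarith
  set A : ℝ := 2 * η / (η - p * β) with hA
  have hA1 : 1 < A := by
    rw [hA, lt_div_iff₀ hden]; nlinarith
  have hA0 : 0 < A := lt_trans one_pos hA1
  set t₀ : ℝ := Real.log A / p with ht₀def
  have ht₀ : 0 < t₀ := div_pos (Real.log_pos hA1) hp0
  have hexp : Real.exp (-p * t₀) = (η - p * β) / (2 * η) := by
    have h1 : -p * t₀ = -Real.log A := by
      rw [ht₀def]; field_simp
    rw [h1, Real.exp_neg, Real.exp_log hA0, hA, inv_div]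
  have hβlt : β < η / p := (lt_div_iff₀ hp0).mpr (by linarith)
  set ε : ℝ := (η / p - β) / 2 with hεdef
  have hε : 0 < ε := by rw [hεdef]; linarith
  have hx0 : η / p * (1 - Real.exp (-p * t₀)) = β + ε := by
    rw [hexp, hεdef]
    field_simp
    ring
  set αstar : ℝ := min η (ε / (t₀ + 1)) / 2 with hαdef
  have hαpos : 0 < αstar := by
    have : 0 < ε / (t₀ + 1) := div_pos hε (by linarith)
    rw [hαdef]
    have := lt_min hη this
    linarith
  refine ⟨αstar, ⟨hαpos, ?_⟩, ?_⟩
  · rw [hαdef]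
    have h1 : min η (ε / (t₀ + 1)) ≤ η := min_le_left _ _
    linarith
  intro α hα0 hα
  refine ⟨t₀, t₀ + 1, by linarith, ?_⟩
  rintro t ⟨ht1, ht2⟩
  have hxmono : η / p * (1 - Real.exp (-p * t₀)) < η / p * (1 - Real.exp (-p * t)) := by
    have : Real.exp (-p * t) < Real.exp (-p * t₀) := by
      apply Real.exp_lt_exp.mpr
      nlinarith
    have hηp : 0 < η / p := div_pos hη hp0
    nlinarith
  have hαt : α * t + β < β + ε := by
    have h2 : αstar ≤ ε / (t₀ + 1) / 2 := by
      rw [hαdef]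
      have := min_le_right η (ε / (t₀ + 1))
      linarith
    have h3 : α * t < α * (t₀ + 1) := by nlinarith
    have h4 : α * (t₀ + 1) < ε / (t₀ + 1) / 2 * (t₀ + 1) := by nlinarith
    have h5 : ε / (t₀ + 1) / 2 * (t₀ + 1) = ε / 2 := by
      field_simp
    nlinarith
  linarith [hx0 ▸ hxmono]
end
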